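/- For a guessing game on a directed graph G on n nodes with alphabet sizes 2^{t_i}, the maximum over all strategies of the winning probability equals α(Γ_t(G)) / 2^{∑_i t_i}, where α is the independence number of the confusion graph. -/

import Mathlib

/-- A `b`-fold coloring of `Γ` with `k` colors: each vertex gets a `b`-element set of
colors, adjacent vertices get disjoint sets. -/
def IsNFoldColoring {V : Type*} (Γ : SimpleGraph V) (b k : ℕ)
    (c : V → Finset (Fin k)) : Prop :=
  (∀ v, (c v).card = b) ∧ ∀ u v, Γ.Adj u v → Disjoint (c u) (c v)

/-- The `b`-fold chromatic number `χ^(b)(Γ)`. -/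
noncomputable def nfoldChromaticNumber {V : Type*} (Γ : SimpleGraph V) (b : ℕ) : ℕ :=
  sInf {k | ∃ c : V → Finset (Fin k), IsNFoldColoring Γ b k c}

/-- The fractional chromatic number `χ_f(Γ) = inf_b χ^(b)(Γ)/b`. -/
noncomputable def fracChromaticNumber {V : Type*} (Γ : SimpleGraph V) : ℝ :=
  ⨅ b : ℕ+, (nfoldChromaticNumber Γ b : ℝ) / (b : ℝ)

/-- `s` is an independent set of `Γ`. -/
def IsIndepFinset {V : Type*} (Γ : SimpleGraph V) (s : Finset V) : Prop :=
  ∀ u ∈ s, ∀ v ∈ s, ¬ Γ.Adj u v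

/-- The independence number `α(Γ)`. -/
noncomputable def indepNum {V : Type*} [Fintype V] (Γ : SimpleGraph V) : ℕ :=
  sSup {k | ∃ s : Finset V, s.card = k ∧ IsIndepFinset Γ s}

/-- `Γ` is vertex transitive. -/
def IsVertexTransitive {V : Type*} (Γ : SimpleGraph V) : Prop :=
  ∀ u v : V, ∃ σ : Γ ≃g Γ, σ u = v

/-- The confusion graph `Γ_t(G)` of the directed graph `G` on `[n]` with edge
relation `E` (an edge `i → j` means `E i j`), for the integer tuple `t`.
Vertices are tuples `x` with `x i ∈ {0,1}^{t i}`; two tuples are adjacent iff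
they are confusable at some node `j`. -/
def confusionGraph (n : ℕ) (E : Fin n → Fin n → Prop) (t : Fin n → ℕ) :
    SimpleGraph ((i : Fin n) → Fin (t i) → Bool) where
  Adj x z := ∃ j, x j ≠ z j ∧ ∀ i, E i j → x i = z i
  symm := by
    constructor
    rintro x z ⟨j, hj, h⟩
    exact ⟨j, fun h' => hj h'.symm, fun i hi => (h i hi).symm⟩
  loopless := by
    constructor
    rintro x ⟨j, hj, -⟩
    exact hj rfl

/-- The disjunctive product of two simple graphs. -/
def disjProd {V₁ V₂ : Type*} (Γ₁ : SimpleGraph V₁) (Γ₂ : SimpleGraph V₂) :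
    SimpleGraph (V₁ × V₂) where
  Adj u v := Γ₁.Adj u.1 v.1 ∨ Γ₂.Adj u.2 v.2
  symm := by constructor; rintro u v (h | h); exacts [Or.inl h.symm, Or.inr h.symm]
  loopless := by constructor; rintro u (h | h) <;> exact h.ne rfl

/-
Any strategy wins only on an independent set of the confusion graph: if two winning
configurations looked the same to player `j`, player `j` would make the same guess on both.
Conversely, every independent set `S` is won on by some strategy: player `j` looks for an element
of `S` consistent with what they see and guesses its `j`-th block, which independence makes
unique.
-/

theorem bddAbove_indepFinset_cards {V : Type*} [Fintype V] (Γ : SimpleGraph V) :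
    BddAbove {k | ∃ s : Finset V, s.card = k ∧ IsIndepFinset Γ s} :=
  ⟨Fintype.card V, by rintro k ⟨s, rfl, -⟩; exact Finset.card_le_univ s⟩

theorem IsIndepFinset.card_le_indepNum {V : Type*} [Fintype V] {Γ : SimpleGraph V}
    {s : Finset V} (hs : IsIndepFinset Γ s) :
    s.card ≤ indepNum Γ :=
  le_csSup (bddAbove_indepFinset_cards Γ) ⟨s, rfl, hs⟩

theorem exists_isIndepFinset_card_eq_indepNum {V : Type*} [Fintype V] (Γ : SimpleGraph V) :
    ∃ s : Finset V, s.card = indepNum Γ ∧ IsIndepFinset Γ s :=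
  Nat.sSup_mem (s := {k | ∃ s : Finset V, s.card = k ∧ IsIndepFinset Γ s})
    ⟨0, ∅, rfl, fun u hu => absurd hu (Finset.notMem_empty u)⟩ (bddAbove_indepFinset_cards Γ)

namespace GuessingGame

variable {n : ℕ} {E : Fin n → Fin n → Prop} {t : Fin n → ℕ}

abbrev Config (t : Fin n → ℕ) : Type := (i : Fin n) → Fin (t i) → Bool

def IsStrategy (E : Fin n → Fin n → Prop) (h : ∀ j : Fin n, Config t → Fin (t j) → Bool) :
    Prop :=
  ∀ j x y, (∀ i, E i j → x i = y i) → h j x = h j y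

def winningSet (h : ∀ j : Fin n, Config t → Fin (t j) → Bool) : Finset (Config t) :=
  Finset.univ.filter fun x => ∀ j, h j x = x j

theorem isIndepFinset_winningSet {h : ∀ j : Fin n, Config t → Fin (t j) → Bool} (hh : IsStrategy E h) :
    IsIndepFinset (confusionGraph n E t) (winningSet h) := by
  rintro x hx z hz ⟨j, hxz, hagree⟩
  simp only [winningSet, Finset.mem_filter, Finset.mem_univ, true_and] at hx hz
  exact hxz (by rw [← hx j, hh j x z hagree, hz j])

theorem _root_.IsIndepFinset.eq_of_agree {S : Finset (Config t)}
    (hS : IsIndepFinset (confusionGraph n E t) S) {s s' : Config t} (hs : s ∈ S) (hs' : s' ∈ S)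
    {j : Fin n} (hagree : ∀ i, E i j → s i = s' i) : s j = s' j :=
  not_not.mp fun hne => hS s hs s' hs' ⟨j, hne, hagree⟩

open Classical in
noncomputable def indepStrategy (E : Fin n → Fin n → Prop) (S : Finset (Config t)) (j : Fin n)
    (x : Config t) : Fin (t j) → Bool :=
  if hx : ∃ s ∈ S, ∀ i, E i j → s i = x i then hx.choose j else fun _ => false

theorem indepStrategy_eq {S : Finset (Config t)} (hS : IsIndepFinset (confusionGraph n E t) S)
    {j : Fin n} {x s : Config t} (hs : s ∈ S) (hsx : ∀ i, E i j → s i = x i) :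
    indepStrategy E S j x = s j := by
  have hx : ∃ s ∈ S, ∀ i, E i j → s i = x i := ⟨s, hs, hsx⟩
  rw [indepStrategy, dif_pos hx]
  exact hS.eq_of_agree hx.choose_spec.1 hs fun i hi => (hx.choose_spec.2 i hi).trans (hsx i hi).symm

theorem isStrategy_indepStrategy {S : Finset (Config t)}
    (hS : IsIndepFinset (confusionGraph n E t) S) : IsStrategy E (indepStrategy E S) := by
  intro j x y hxy
  by_cases hx : ∃ s ∈ S, ∀ i, E i j → s i = x i
  · obtain ⟨s, hs, hsx⟩ := hx
    rw [indepStrategy_eq hS hs hsx, indepStrategy_eq hS hs fun i hi => (hsx i hi).trans (hxy i hi)]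
  · have hy : ¬ ∃ s ∈ S, ∀ i, E i j → s i = y i := fun ⟨s, hs, hsy⟩ =>
      hx ⟨s, hs, fun i hi => (hsy i hi).trans (hxy i hi).symm⟩
    rw [indepStrategy, indepStrategy, dif_neg hx, dif_neg hy]

theorem subset_winningSet_indepStrategy {S : Finset (Config t)}
    (hS : IsIndepFinset (confusionGraph n E t) S) : S ⊆ winningSet (indepStrategy E S) := by
  intro s hs
  simpa [winningSet] using fun j => indepStrategy_eq hS hs fun i _ => rfl

theorem natCard_winning_eq_card_winningSet (h : ∀ j : Fin n, Config t → Fin (t j) → Bool) :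
    Nat.card {x : Config t // ∀ j, h j x = x j} = (winningSet h).card := by
  rw [Nat.card_eq_fintype_card, Fintype.card_subtype, winningSet]

end GuessingGame

open GuessingGame

theorem guessing_game_max_winning_prob (n : ℕ) (E : Fin n → Fin n → Prop)
    (t : Fin n → ℕ) :
    IsGreatest
      {p : ℝ | ∃ h : ∀ j : Fin n, ((i : Fin n) → Fin (t i) → Bool) → (Fin (t j) → Bool),
        (∀ j x y, (∀ i, E i j → x i = y i) → h j x = h j y) ∧
        p = (Nat.card {x : (i : Fin n) → Fin (t i) → Bool // ∀ j, h j x = x j} : ℝ)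
              / 2 ^ (∑ i, t i)}
      ((indepNum (confusionGraph n E t) : ℝ) / 2 ^ (∑ i, t i)) := by
  refine ⟨?_, ?_⟩
  · obtain ⟨S, hcard, hS⟩ := exists_isIndepFinset_card_eq_indepNum (confusionGraph n E t)
    have hwin := (isIndepFinset_winningSet (isStrategy_indepStrategy hS)).card_le_indepNum
    have hS_le := Finset.card_le_card (subset_winningSet_indepStrategy hS)
    refine ⟨indepStrategy E S, isStrategy_indepStrategy hS, ?_⟩
    rw [natCard_winning_eq_card_winningSet, le_antisymm hwin (hcard ▸ hS_le)]
  · rintro p ⟨h, hh, rfl⟩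
    rw [natCard_winning_eq_card_winningSet]
    gcongr
    exact (isIndepFinset_winningSet hh).card_le_indepNum
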